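/- arXiv:2311.14236 — 7 statements merged into one kernel-verified Lean document; each statement's English description precedes it below -/
import Mathlib

section
/- Let M be an f-matching in a multigraph G, let S₁ be a shortest augmenting trail for M, and let S₂ be a shortest augmenting trail for the matching M ⊕ S₁ obtained by augmenting along S₁. Then |S₁| ≤ |S₂|, i.e., the length of a shortest augmenting trail never decreases after augmentation. -/
structure Multigraph (V E : Type) where
  fst : E → V
  snd : E → V

structure MWalk (V E : Type) where
  len : ℕ
  vs : ℕ → V
  es : ℕ → E

variable {V E : Type}

def Multigraph.links (G : Multigraph V E) (e : E) (u v : V) : Prop :=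
  (G.fst e = u ∧ G.snd e = v) ∨ (G.fst e = v ∧ G.snd e = u)

def MWalk.IsWalk (G : Multigraph V E) (W : MWalk V E) : Prop :=
  ∀ i < W.len, G.links (W.es i) (W.vs i) (W.vs (i+1))

/-- A trail is a walk with no repeated edges. -/
def MWalk.IsTrail (G : Multigraph V E) (W : MWalk V E) : Prop :=
  W.IsWalk G ∧ ∀ i < W.len, ∀ j < W.len, W.es i = W.es j → i = j

/-- Degree of `v` in the edge set `M` (loops counted twice). -/
def Multigraph.deg [DecidableEq V] [DecidableEq E] (G : Multigraph V E)
    (M : Finset E) (v : V) : ℕ :=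
  (M.filter (fun e => G.fst e = v)).card + (M.filter (fun e => G.snd e = v)).card

/-- An `f`-matching: every vertex `v` has degree at most `f v`. -/
def Multigraph.IsFMatching [DecidableEq V] [DecidableEq E] (G : Multigraph V E)
    (f : V → ℕ) (M : Finset E) : Prop :=
  ∀ v, G.deg M v ≤ f v

def MWalk.edgeSet [DecidableEq E] (W : MWalk V E) : Finset E :=
  (Finset.range W.len).image W.es

/-- Consecutive edges alternate between `M` and its complement. -/
def MWalk.Alternating [DecidableEq E] (W : MWalk V E) (M : Finset E) : Prop :=
  ∀ i, i + 1 < W.len → ((W.es i ∈ M) ↔ W.es (i+1) ∉ M)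

/-- An augmenting trail: an alternating trail that starts and ends with
unmatched edges at free (deficient) vertices; if closed, the total endpoint
deficiency is at least 2. -/
def IsAugTrail [DecidableEq V] [DecidableEq E] (G : Multigraph V E) (f : V → ℕ)
    (M : Finset E) (W : MWalk V E) : Prop :=
  W.IsTrail G ∧ 1 ≤ W.len ∧ W.len % 2 = 1 ∧ W.Alternating M ∧
  W.es 0 ∉ M ∧ W.es (W.len - 1) ∉ M ∧
  G.deg M (W.vs 0) < f (W.vs 0) ∧ G.deg M (W.vs W.len) < f (W.vs W.len) ∧
  (W.vs 0 = W.vs W.len → G.deg M (W.vs 0) + 2 ≤ f (W.vs 0))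

/-- A shortest augmenting trail (sat). -/
def IsSAT [DecidableEq V] [DecidableEq E] (G : Multigraph V E) (f : V → ℕ)
    (M : Finset E) (W : MWalk V E) : Prop :=
  IsAugTrail G f M W ∧ ∀ W' : MWalk V E, IsAugTrail G f M W' → W.len ≤ W'.len

/-!
Let `N = (M ∆ S₁) ∆ S₂`: an `f`-matching whose degrees exceed those of `M` exactly at the
four endpoints of `S₁` and `S₂` (counted with multiplicity). Growing a longest alternating trail
inside `M ∆ N` from a vertex where `N` has larger degree than `M` produces an `M`-augmenting
trail `T₁`. Augmenting along `T₁` accounts for only two of the four surplus endpoints, so the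
same argument for `M ∆ T₁` and `N` gives a second augmenting trail `T₂ ⊆ (M ∆ N) \ T₁`, which
is augmenting for `M` as well. Both are at least as long as `S₁`, and
`|T₁| + |T₂| ≤ |M ∆ N| = |S₁ ∆ S₂| ≤ |S₁| + |S₂|`.
-/

open Finset
open scoped symmDiff

namespace Multigraph

variable (G : Multigraph V E)

def ends (e : E) : Multiset V := {G.fst e, G.snd e}

variable {G}

theorem mem_ends_iff {e : E} {v : V} : v ∈ G.ends e ↔ G.fst e = v ∨ G.snd e = v := by
  simp [ends, eq_comm]

theorem ends_eq_of_links {e : E} {u w : V} (h : G.links e u w) : G.ends e = {u, w} := by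
  rcases h with ⟨rfl, rfl⟩ | ⟨rfl, rfl⟩
  · rfl
  · exact Multiset.pair_comm _ _

theorem exists_links_of_mem_ends {e : E} {v : V} (h : v ∈ G.ends e) : ∃ w, G.links e v w := by
  rcases mem_ends_iff.1 h with h | h
  · exact ⟨G.snd e, .inl ⟨h, rfl⟩⟩
  · exact ⟨G.fst e, .inr ⟨rfl, h⟩⟩

variable (G) in
def degs (A : Finset E) : Multiset V := ∑ e ∈ A, G.ends e

variable [DecidableEq V] [DecidableEq E]

theorem count_degs (A : Finset E) (v : V) : (G.degs A).count v = G.deg A v := by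
  simp only [degs, Multiset.count_sum', ends, Multiset.insert_eq_cons, Multiset.count_cons,
    Multiset.count_singleton, Multigraph.deg, card_filter, sum_add_distrib, eq_comm (a := v)]
  ring

theorem isFMatching_deg_iff {M N : Finset E} :
    G.IsFMatching (G.deg N) M ↔ G.degs M ≤ G.degs N := by
  simp only [Multiset.le_iff_count, count_degs, IsFMatching]

theorem exists_mem_sdiff_of_deg_lt {A B : Finset E} {v : V} (h : G.deg A v < G.deg B v) :
    ∃ e ∈ B \ A, v ∈ G.ends e := by
  by_contra! hB
  refine h.not_ge ?_
  simp only [← count_degs, degs, Multiset.count_sum']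
  refine sum_le_sum_of_ne_zero fun e he hv => ?_
  by_contra hA
  exact hB e (mem_sdiff.2 ⟨he, hA⟩) (Multiset.count_ne_zero.1 hv)

end Multigraph

theorem Finset.symmDiff_symmDiff_eq_sdiff {α : Type*} [DecidableEq α] {M N T : Finset α}
    (h : T ⊆ M ∆ N) : M ∆ T ∆ N = M ∆ N \ T := by
  ext x
  have := @h x
  simp only [mem_symmDiff, mem_sdiff] at *
  tauto

namespace MWalk

variable {G : Multigraph V E} {W : MWalk V E} {M : Finset E}

def OddMatched (W : MWalk V E) (M : Finset E) : Prop :=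
  ∀ i < W.len, (W.es i ∈ M ↔ Odd i)

def ends (W : MWalk V E) : Multiset V := {W.vs 0, W.vs W.len}

theorem IsWalk.ends_es (hW : W.IsWalk G) {i : ℕ} (hi : i < W.len) :
    G.ends (W.es i) = {W.vs i, W.vs (i + 1)} :=
  Multigraph.ends_eq_of_links (hW i hi)

variable [DecidableEq E]

theorem Alternating.oddMatched (h : W.Alternating M) (h0 : W.es 0 ∉ M) : W.OddMatched M := by
  intro i
  induction i with
  | zero => exact fun _ => by simpa using h0
  | succ i ih =>
    intro hi
    rw [Nat.odd_add_one, ← ih (by omega)]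
    have := h i hi
    tauto

theorem OddMatched.alternating (h : W.OddMatched M) : W.Alternating M := by
  intro i hi
  rw [h i (by omega), h (i + 1) hi, Nat.odd_add_one, not_not]

theorem card_edgeSet_le (W : MWalk V E) : W.edgeSet.card ≤ W.len :=
  card_image_le.trans (card_range _).le

theorem IsTrail.card_edgeSet (hW : W.IsTrail G) : W.edgeSet.card = W.len := by
  rw [edgeSet, card_image_of_injOn, card_range]
  intro i hi j hj
  exact hW.2 i (mem_range.1 hi) j (mem_range.1 hj)

theorem IsTrail.degs_symmDiff_image_range (hW : W.IsTrail G) (hM : W.OddMatched M) {n : ℕ}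
    (hn : n ≤ W.len) :
    G.degs (M ∆ ((range n).image W.es)) + (if Even n then {W.vs n} else 0) =
      G.degs M + {W.vs 0} + (if Even n then 0 else {W.vs n}) := by
  induction n with
  | zero =>
    rw [range_zero, image_empty, ← bot_eq_empty, symmDiff_bot, if_pos Even.zero,
      if_pos Even.zero, add_zero]
  | succ n ih =>
    set P := (range n).image W.es
    have hnew : W.es n ∉ P := by
      simp only [P, mem_image, mem_range, not_exists, not_and]
      exact fun i hi heq => by have := hW.2 i (by omega) n (by omega) heq; omega
    have hends : G.ends (W.es n) = {W.vs n} + {W.vs (n + 1)} := hW.1.ends_es (by omega)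
    rw [range_add_one, image_insert]
    specialize ih (by omega)
    rcases Nat.even_or_odd n with hev | hodd
    · have hnM : W.es n ∉ M := by simpa [Nat.not_odd_iff_even.2 hev] using hM n (by omega)
      have hins : M ∆ (insert (W.es n) P) = insert (W.es n) (M ∆ P) := by
        ext x; by_cases hx : x = W.es n <;> simp [mem_symmDiff, hx, hnM, hnew]
      rw [if_pos hev, if_pos hev, add_zero] at ih
      rw [if_neg (Nat.not_even_iff_odd.2 hev.add_one),
        if_neg (Nat.not_even_iff_odd.2 hev.add_one), add_zero, hins, Multigraph.degs,
        sum_insert (by simp [mem_symmDiff, hnM, hnew]), ← Multigraph.degs, hends, ← ih]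
      abel
    · have hnM : W.es n ∈ M := (hM n (by omega)).2 hodd
      have hers : M ∆ P = insert (W.es n) (M ∆ (insert (W.es n) P)) := by
        ext x; by_cases hx : x = W.es n <;> simp [mem_symmDiff, hx, hnM, hnew]
      have hev : Even (n + 1) := hodd.add_one
      rw [if_neg (Nat.not_even_iff_odd.2 hodd), if_neg (Nat.not_even_iff_odd.2 hodd), add_zero,
        hers, Multigraph.degs, sum_insert (by simp [mem_symmDiff, hnM]), ← Multigraph.degs,
        hends] at ih
      rw [if_pos hev, if_pos hev, add_zero]
      apply add_right_cancel (b := {W.vs n})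
      rw [← ih]
      abel

theorem IsTrail.degs_symmDiff_edgeSet_of_even (hW : W.IsTrail G) (hM : W.OddMatched M)
    (heven : Even W.len) :
    G.degs (M ∆ W.edgeSet) + {W.vs W.len} = G.degs M + {W.vs 0} := by
  have := hW.degs_symmDiff_image_range hM le_rfl
  rwa [if_pos heven, if_pos heven, add_zero] at this

theorem IsTrail.degs_symmDiff_edgeSet_of_odd (hW : W.IsTrail G) (hM : W.OddMatched M)
    (hodd : Odd W.len) :
    G.degs (M ∆ W.edgeSet) = G.degs M + W.ends := by
  have := hW.degs_symmDiff_image_range hM le_rfl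
  rwa [if_neg (Nat.not_even_iff_odd.2 hodd), if_neg (Nat.not_even_iff_odd.2 hodd), add_zero,
    add_assoc, Multiset.singleton_add, ← Multiset.insert_eq_cons] at this

end MWalk

namespace IsAugTrail

variable [DecidableEq V] [DecidableEq E] {G : Multigraph V E} {f : V → ℕ} {M : Finset E}
  {W : MWalk V E}

theorem isTrail (hA : IsAugTrail G f M W) : W.IsTrail G := hA.1

theorem odd_len (hA : IsAugTrail G f M W) : Odd W.len := Nat.odd_iff.2 hA.2.2.1

theorem oddMatched (hA : IsAugTrail G f M W) : W.OddMatched M :=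
  hA.2.2.2.1.oddMatched hA.2.2.2.2.1

theorem degs_symmDiff (hA : IsAugTrail G f M W) :
    G.degs (M ∆ W.edgeSet) = G.degs M + W.ends :=
  hA.isTrail.degs_symmDiff_edgeSet_of_odd hA.oddMatched hA.odd_len

theorem _root_.isAugTrail_iff (hM : G.IsFMatching f M) :
    IsAugTrail G f M W ↔
      W.IsTrail G ∧ Odd W.len ∧ W.OddMatched M ∧ ∀ v, G.deg M v + W.ends.count v ≤ f v := by
  constructor
  · intro hA
    refine ⟨hA.isTrail, hA.odd_len, hA.oddMatched, fun v => ?_⟩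
    obtain ⟨-, -, -, -, -, -, hfree₀, hfree, hclosed⟩ := hA
    have := hM v
    by_cases h₀ : W.vs 0 = v <;> by_cases h : W.vs W.len = v <;>
      simp_all [MWalk.ends, eq_comm (a := v)]
  · rintro ⟨hW, hodd, hM', hends⟩
    have hlen := hodd.pos
    refine ⟨hW, hlen, Nat.odd_iff.1 hodd, hM'.alternating, fun h => ?_, fun h => ?_, ?_, ?_, ?_⟩
    · simpa using (hM' 0 hlen).1 h
    · exact Nat.not_odd_iff_even.2 (Nat.Odd.sub_odd hodd odd_one) ((hM' _ (by omega)).1 h)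
    · exact (Nat.lt_add_of_pos_right (Multiset.count_pos.2 (by simp [MWalk.ends]))).trans_le
        (hends _)
    · exact (Nat.lt_add_of_pos_right (Multiset.count_pos.2 (by simp [MWalk.ends]))).trans_le
        (hends _)
    · intro h
      simpa [MWalk.ends, h] using hends (W.vs W.len)

theorem isFMatching_symmDiff (hM : G.IsFMatching f M) (hA : IsAugTrail G f M W) :
    G.IsFMatching f (M ∆ W.edgeSet) := fun v => by
  rw [← Multigraph.count_degs, hA.degs_symmDiff, Multiset.count_add, Multigraph.count_degs]
  exact ((isAugTrail_iff hM).1 hA).2.2.2 v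

theorem mono {g : V → ℕ} (hA : IsAugTrail G f M W) (hfg : ∀ v, f v ≤ g v) :
    IsAugTrail G g M W := by
  obtain ⟨hW, hlen, hodd, halt, h₀, hlast, hfree₀, hfree, hclosed⟩ := hA
  exact ⟨hW, hlen, hodd, halt, h₀, hlast, hfree₀.trans_le (hfg _), hfree.trans_le (hfg _),
    fun h => (hclosed h).trans (hfg _)⟩

theorem of_agree {M' : Finset E} (hA : IsAugTrail G f M' W)
    (hagree : ∀ e ∈ W.edgeSet, e ∈ M ↔ e ∈ M') (hdeg : ∀ v, G.deg M v ≤ G.deg M' v) :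
    IsAugTrail G f M W := by
  obtain ⟨hW, hlen, hodd, halt, h₀, hlast, hfree₀, hfree, hclosed⟩ := hA
  have hmem : ∀ i < W.len, (W.es i ∈ M ↔ W.es i ∈ M') := fun i hi =>
    hagree _ (mem_image_of_mem _ (mem_range.2 hi))
  refine ⟨hW, hlen, hodd, fun i hi => ?_, by rwa [hmem 0 hlen], by rwa [hmem _ (by omega)],
    (hdeg _).trans_lt hfree₀, (hdeg _).trans_lt hfree,
    fun h => (Nat.add_le_add_right (hdeg _) 2).trans (hclosed h)⟩
  rw [hmem i (by omega), hmem (i + 1) hi]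
  exact halt i hi

end IsAugTrail

namespace MWalk

def snoc (W : MWalk V E) (e : E) (w : V) : MWalk V E where
  len := W.len + 1
  vs i := if i = W.len + 1 then w else W.vs i
  es i := if i = W.len then e else W.es i

variable {G : Multigraph V E} {W : MWalk V E} {e : E} {w : V}

@[simp] theorem snoc_len : (W.snoc e w).len = W.len + 1 := rfl

theorem snoc_vs_of_le {i : ℕ} (hi : i ≤ W.len) : (W.snoc e w).vs i = W.vs i :=
  if_neg (by omega)

@[simp] theorem snoc_vs_len_add_one : (W.snoc e w).vs (W.len + 1) = w := if_pos rfl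

theorem snoc_es_of_lt {i : ℕ} (hi : i < W.len) : (W.snoc e w).es i = W.es i :=
  if_neg (by omega)

@[simp] theorem snoc_es_len : (W.snoc e w).es W.len = e := if_pos rfl

theorem edgeSet_snoc [DecidableEq E] : (W.snoc e w).edgeSet = insert e W.edgeSet := by
  simp only [edgeSet, snoc_len, range_add_one, image_insert, snoc_es_len]
  congr 1
  exact image_congr fun i hi => snoc_es_of_lt (mem_range.1 hi)

theorem IsTrail.snoc [DecidableEq E] (hW : W.IsTrail G) (he : e ∉ W.edgeSet)
    (hl : G.links e (W.vs W.len) w) : (W.snoc e w).IsTrail G := by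
  constructor
  · intro i hi
    rcases Nat.lt_succ_iff_lt_or_eq.1 hi with hi | rfl
    · rw [snoc_es_of_lt hi, snoc_vs_of_le hi.le, snoc_vs_of_le hi]
      exact hW.1 i hi
    · rw [snoc_es_len, snoc_vs_of_le le_rfl, snoc_vs_len_add_one]
      exact hl
  · have hne : ∀ k < W.len, W.es k ≠ e := fun k hk h =>
      he (h ▸ mem_image_of_mem _ (mem_range.2 hk))
    intro i hi j hj hij
    rcases Nat.lt_succ_iff_lt_or_eq.1 hi with hi | rfl <;>
      rcases Nat.lt_succ_iff_lt_or_eq.1 hj with hj | rfl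
    · rw [snoc_es_of_lt hi, snoc_es_of_lt hj] at hij
      exact hW.2 i hi j hj hij
    · rw [snoc_es_of_lt hi, snoc_es_len] at hij
      exact absurd hij (hne i hi)
    · rw [snoc_es_len, snoc_es_of_lt hj] at hij
      exact absurd hij.symm (hne j hj)
    · rfl

theorem OddMatched.snoc {M : Finset E} [DecidableEq E] (hW : W.OddMatched M)
    (he : e ∈ M ↔ Odd W.len) : (W.snoc e w).OddMatched M := by
  intro i hi
  rcases Nat.lt_succ_iff_lt_or_eq.1 hi with hi | rfl
  · rw [snoc_es_of_lt hi]
    exact hW i hi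
  · rwa [snoc_es_len]

end MWalk

namespace Multigraph

variable [DecidableEq E] (G : Multigraph V E)

structure IsAltTrailFrom (M D : Finset E) (a : V) (T : MWalk V E) : Prop where
  isTrail : T.IsTrail G
  oddMatched : T.OddMatched M
  vs_zero : T.vs 0 = a
  edgeSet_subset : T.edgeSet ⊆ D

variable {G} {M N D : Finset E} {a : V} {T : MWalk V E}

theorem IsAltTrailFrom.exists_snoc (hT : G.IsAltTrailFrom M D a T) {e : E}
    (he : e ∈ D \ T.edgeSet) (hv : T.vs T.len ∈ G.ends e) (hpar : e ∈ M ↔ Odd T.len) :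
    ∃ w, G.IsAltTrailFrom M D a (T.snoc e w) := by
  obtain ⟨hW, hM, h₀, hsub⟩ := hT
  obtain ⟨w, hl⟩ := exists_links_of_mem_ends hv
  rw [mem_sdiff] at he
  refine ⟨w, hW.snoc he.2 hl, hM.snoc hpar, ?_, ?_⟩
  · rw [MWalk.snoc_vs_of_le (Nat.zero_le _), h₀]
  · rw [MWalk.edgeSet_snoc]
    exact insert_subset he.1 hsub

/-- The edges by which `T` can still be extended inside `M ∆ N` are those of `(M ∆ T) ∆ N`. -/
theorem IsAltTrailFrom.exists_snoc_of_mem_symmDiff (hT : G.IsAltTrailFrom M (M ∆ N) a T)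
    {e : E} (he : e ∈ M ∆ T.edgeSet ∆ N) (hv : T.vs T.len ∈ G.ends e)
    (hpar : e ∈ M ∆ T.edgeSet ↔ Odd T.len) :
    ∃ w, G.IsAltTrailFrom M (M ∆ N) a (T.snoc e w) := by
  rw [symmDiff_symmDiff_eq_sdiff hT.edgeSet_subset] at he
  refine hT.exists_snoc he hv ?_
  rwa [mem_symmDiff, or_iff_left (by simp [(mem_sdiff.1 he).2]), and_iff_left (mem_sdiff.1 he).2]
    at hpar

variable [DecidableEq V]

/-- `G.degs (M ∆ T)` differs from `G.degs M + {a}` only at the far end `v` of `T`. For even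
`T.len` it is short of `G.degs N` at `v`, giving an edge of `N \ (M ∆ T)` at `v`; for odd `T.len`
either `T` is augmenting or `M ∆ T` exceeds `N` at `v`, giving an edge of `(M ∆ T) \ N` at `v`. -/
theorem IsAltTrailFrom.isAugTrail_or_exists_snoc (ha : G.degs M + {a} ≤ G.degs N)
    (hT : G.IsAltTrailFrom M (M ∆ N) a T) :
    IsAugTrail G (G.deg N) M T ∨ ∃ e w, G.IsAltTrailFrom M (M ∆ N) a (T.snoc e w) := by
  have hext := fun e => hT.exists_snoc_of_mem_symmDiff (e := e)
  obtain ⟨hW, hM, h₀, -⟩ := hT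
  set K := M ∆ T.edgeSet
  rcases Nat.even_or_odd T.len with heven | hodd
  · have hK := hW.degs_symmDiff_edgeSet_of_even hM heven
    have hlt : G.deg K (T.vs T.len) < G.deg N (T.vs T.len) := by
      have := Multiset.count_le_of_le (T.vs T.len) (hK.trans_le (h₀ ▸ ha))
      rwa [Multiset.count_add, Multiset.count_singleton_self, count_degs, count_degs] at this
    obtain ⟨e, he, hv⟩ := exists_mem_sdiff_of_deg_lt hlt
    rw [mem_sdiff] at he
    exact .inr ⟨e, hext e (mem_symmDiff.2 (.inr he)) hv
      (iff_of_false he.2 (Nat.not_odd_iff_even.2 heven))⟩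
  · have hK : ∀ u, G.deg K u = G.deg M u + T.ends.count u := fun u => by
      rw [← count_degs, hW.degs_symmDiff_edgeSet_of_odd hM hodd, Multiset.count_add, count_degs]
    by_cases hle : ∀ u, G.deg K u ≤ G.deg N u
    · have hMN : G.IsFMatching (G.deg N) M :=
        isFMatching_deg_iff.2 ((Multiset.le_add_right _ _).trans ha)
      exact .inl ((isAugTrail_iff hMN).2 ⟨hW, hodd, hM, fun u => (hK u).symm.trans_le (hle u)⟩)
    · obtain ⟨u, hu⟩ := not_forall.1 hle
      rw [not_le] at hu
      obtain rfl : u = T.vs T.len := by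
        by_contra hne
        have := Multiset.count_le_of_le u ha
        rw [hK] at hu
        simp only [MWalk.ends, Multiset.insert_eq_cons, Multiset.count_add, Multiset.count_cons,
          Multiset.count_singleton, hne, if_false, h₀, count_degs] at hu this
        omega
      obtain ⟨e, he, hv⟩ := exists_mem_sdiff_of_deg_lt hu
      rw [mem_sdiff] at he
      exact .inr ⟨e, hext e (mem_symmDiff.2 (.inl he)) hv (iff_of_true he.1 hodd)⟩

theorem exists_isAugTrail_subset_symmDiff (ha : G.degs M + {a} ≤ G.degs N) :
    ∃ T, IsAugTrail G (G.deg N) M T ∧ T.edgeSet ⊆ M ∆ N := by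
  -- an edge `e₀` only serves to build the trivial walk at `a`
  have haN : a ∈ G.degs N := Multiset.mem_of_le ha (by simp)
  obtain ⟨e₀, -⟩ := Multiset.mem_sum.1 haN
  by_contra! hno
  have hlong : ∀ k, ∃ T, G.IsAltTrailFrom M (M ∆ N) a T ∧ T.len = k := by
    intro k
    induction k with
    | zero =>
      refine ⟨⟨0, fun _ => a, fun _ => e₀⟩, ⟨?_, ?_, rfl, ?_⟩, rfl⟩ <;>
        simp [MWalk.IsTrail, MWalk.IsWalk, MWalk.OddMatched, MWalk.edgeSet]
    | succ k ih =>
      obtain ⟨T, hT, rfl⟩ := ih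
      rcases hT.isAugTrail_or_exists_snoc ha with hA | ⟨e, w, hT'⟩
      · exact absurd hT.edgeSet_subset (hno T hA)
      · exact ⟨_, hT', rfl⟩
  obtain ⟨T, hT, hlen⟩ := hlong ((M ∆ N).card + 1)
  have := card_le_card hT.edgeSet_subset
  rw [hT.isTrail.card_edgeSet] at this
  omega

theorem exists_disjoint_isAugTrail {X : Multiset V} (hN : G.degs N = G.degs M + X)
    (hX : 2 < X.card) :
    ∃ T₁ T₂ : MWalk V E, IsAugTrail G (G.deg N) M T₁ ∧ IsAugTrail G (G.deg N) M T₂ ∧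
      Disjoint T₁.edgeSet T₂.edgeSet ∧ T₁.edgeSet ∪ T₂.edgeSet ⊆ M ∆ N := by
  obtain ⟨a, ha⟩ := Multiset.card_pos_iff_exists_mem.1 (by omega : 0 < X.card)
  have hle : G.degs M ≤ G.degs N := hN ▸ Multiset.le_add_right _ _
  have haN : G.degs M + {a} ≤ G.degs N := by
    rw [hN]
    exact add_le_add_right (Multiset.singleton_le.2 ha) _
  obtain ⟨T₁, hT₁, hsub₁⟩ := exists_isAugTrail_subset_symmDiff haN
  have hM₁ : G.degs (M ∆ T₁.edgeSet) < G.degs N := by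
    refine lt_of_le_of_ne ?_ fun h => ?_
    · exact isFMatching_deg_iff.1 (hT₁.isFMatching_symmDiff (isFMatching_deg_iff.2 hle))
    · have := congrArg Multiset.card h
      rw [hT₁.degs_symmDiff, hN] at this
      simp [MWalk.ends] at this
      omega
  obtain ⟨b, hb⟩ := Multiset.lt_iff_cons_le.1 hM₁
  obtain ⟨T₂, hT₂, hsub₂⟩ := exists_isAugTrail_subset_symmDiff
    (by rwa [add_comm, Multiset.singleton_add] : G.degs (M ∆ T₁.edgeSet) + {b} ≤ G.degs N)
  rw [symmDiff_symmDiff_eq_sdiff hsub₁] at hsub₂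
  have hnot₁ : ∀ e ∈ T₂.edgeSet, e ∉ T₁.edgeSet := fun e he => (mem_sdiff.1 (hsub₂ he)).2
  refine ⟨T₁, T₂, hT₁, hT₂.of_agree (fun e he => ?_) (fun v => ?_),
    disjoint_right.2 hnot₁, union_subset hsub₁ (hsub₂.trans sdiff_subset)⟩
  · simp [mem_symmDiff, hnot₁ e he]
  · rw [← count_degs, ← count_degs, hT₁.degs_symmDiff]
    exact Multiset.count_le_of_le _ (Multiset.le_add_right _ _)

end Multigraph

/-- Hopcroft–Karp / Karzanov monotonicity: if S₁ is a shortest augmenting trail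
for the f-matching M and S₂ is a shortest augmenting trail for M ⊕ S₁, then
|S₁| ≤ |S₂|. -/
theorem stmt_0 [DecidableEq V] [DecidableEq E] (G : Multigraph V E) (f : V → ℕ)
    (M : Finset E) (hM : G.IsFMatching f M) (S₁ S₂ : MWalk V E)
    (h1 : IsSAT G f M S₁)
    (h2 : IsSAT G f (symmDiff M S₁.edgeSet) S₂) :
    S₁.len ≤ S₂.len := by
  obtain ⟨hS₁, hmin⟩ := h1
  set N := M ∆ S₁.edgeSet ∆ S₂.edgeSet with hNdef
  have hN : G.IsFMatching f N := h2.1.isFMatching_symmDiff (hS₁.isFMatching_symmDiff hM)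
  have hdegs : G.degs N = G.degs M + (S₁.ends + S₂.ends) := by
    rw [h2.1.degs_symmDiff, hS₁.degs_symmDiff, add_assoc]
  obtain ⟨T₁, T₂, hT₁, hT₂, hdisj, hsub⟩ :=
    Multigraph.exists_disjoint_isAugTrail hdegs (by simp [MWalk.ends])
  have hlen : T₁.len + T₂.len ≤ S₁.len + S₂.len := calc
    T₁.len + T₂.len = (T₁.edgeSet ∪ T₂.edgeSet).card := by
      rw [card_union_of_disjoint hdisj, hT₁.isTrail.card_edgeSet, hT₂.isTrail.card_edgeSet]
    _ ≤ (M ∆ N).card := card_le_card hsub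
    _ = (S₁.edgeSet ∆ S₂.edgeSet).card := by
      rw [hNdef, symmDiff_assoc, symmDiff_symmDiff_cancel_left]
    _ ≤ (S₁.edgeSet ∪ S₂.edgeSet).card := card_le_card symmDiff_le_sup
    _ ≤ S₁.len + S₂.len :=
      (card_union_le _ _).trans (add_le_add S₁.card_edgeSet_le S₂.card_edgeSet_le)
  have := hmin T₁ (hT₁.mono hN)
  have := hmin T₂ (hT₂.mono hN)
  omega
end

section
/- In any shortest augmenting trail S for an f-matching M, every vertex v occurs at most twice. Consequently the length of a shortest augmenting trail never exceeds 2n, where n is the number of vertices. -/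
variable {V E : Type}

lemma MWalk.parity_of_alternating [DecidableEq E] {W : MWalk V E} {M : Finset E}
    (halt : W.Alternating M) (h0 : W.es 0 ∉ M) :
    ∀ k, k < W.len → (W.es k ∈ M ↔ k % 2 = 1) := by
  intro k
  induction k with
  | zero => intro _; simp [h0]
  | succ k ih =>
    intro hk
    have h1 := halt k hk
    have h2 := ih (by omega)
    by_cases hkM : W.es (k+1) ∈ M
    · simp only [hkM, true_iff]
      have : W.es k ∉ M := by tauto
      have : ¬ (k % 2 = 1) := by tauto
      omega
    · simp only [hkM, false_iff]
      have : W.es k ∈ M := by tauto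
      have : k % 2 = 1 := by tauto
      omega

/-- Two occurrences of the same vertex in a shortest augmenting trail have
opposite parity. -/
lemma sat_occ_parity [DecidableEq V] [DecidableEq E]
    (G : Multigraph V E) (f : V → ℕ) (M : Finset E)
    (S : MWalk V E) (hS : IsSAT G f M S) {i j : ℕ} (hij : i < j) (hj : j ≤ S.len)
    (hv : S.vs i = S.vs j) : (j - i) % 2 = 1 := by
  by_contra hodd
  obtain ⟨⟨⟨hwalk, hinj⟩, hlen1, hlenodd, halt, hes0, hesl, hdeg0, hdegl, hclosed⟩, hmin⟩ := hS
  set n := S.len with hn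
  have par := MWalk.parity_of_alternating halt hes0
  set d := j - i with hd
  have hd2 : 2 ≤ d := by
    rcases Nat.even_or_odd d with h | h
    · have : d ≠ 0 := by omega
      rcases h with ⟨m, hm⟩; omega
    · exact absurd (Nat.odd_iff.mp h) hodd
  have hdev : d % 2 = 0 := by
    rcases Nat.even_or_odd d with h | h
    · omega
    · exact absurd (Nat.odd_iff.mp h) hodd
  have hdlt : d + 1 ≤ n := by
    -- d ≤ n and d even, n odd
    have : d ≤ n := by omega
    omega
  have hij' : j = i + d := by omega
  -- the excised walk
  set W' : MWalk V E :=
    ⟨n - d, fun k => if k ≤ i then S.vs k else S.vs (k + d),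
            fun k => if k < i then S.es k else S.es (k + d)⟩ with hW'
  have hlen' : W'.len = n - d := rfl
  have hvs_lo : ∀ k, k ≤ i → W'.vs k = S.vs k := by
    intro k hk; simp [hW', hk]
  have hvs_hi : ∀ k, i ≤ k → W'.vs k = S.vs (k + d) := by
    intro k hk
    rcases eq_or_lt_of_le hk with h | h
    · subst h; simp [hW', hv, hij']
    · simp [hW', Nat.not_le.mpr h]
  have hes_lo : ∀ k, k < i → W'.es k = S.es k := by
    intro k hk; simp [hW', hk]
  have hes_hi : ∀ k, i ≤ k → W'.es k = S.es (k + d) := by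
    intro k hk; simp [hW', Nat.not_lt.mpr hk]
  have hile : i ≤ n - d := by omega
  have par' : ∀ k, k < n - d → (W'.es k ∈ M ↔ k % 2 = 1) := by
    intro k hk
    by_cases hki : k < i
    · rw [hes_lo k hki]
      exact par k (by omega)
    · rw [hes_hi k (by omega)]
      rw [par (k + d) (by omega)]
      omega
  have hW'aug : IsAugTrail G f M W' := by
    refine ⟨⟨?_, ?_⟩, by simp [hlen']; omega, by simp [hlen']; omega, ?_, ?_, ?_, ?_, ?_, ?_⟩
    · -- walk
      intro k hk
      simp only [hlen'] at hk
      by_cases hki : k < i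
      · rw [hes_lo k hki, hvs_lo k (by omega), hvs_lo (k+1) (by omega)]
        exact hwalk k (by omega)
      · rw [hes_hi k (by omega), hvs_hi k (by omega), hvs_hi (k+1) (by omega)]
        have := hwalk (k + d) (by omega)
        have hplus : k + 1 + d = k + d + 1 := by omega
        rw [hplus]
        exact this
    · -- trail: no repeated edges
      intro k hk l hl heq
      simp only [hlen'] at hk hl
      by_cases hki : k < i <;> by_cases hli : l < i
      · rw [hes_lo k hki, hes_lo l hli] at heq
        exact hinj k (by omega) l (by omega) heq
      · rw [hes_lo k hki, hes_hi l (by omega)] at heq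
        have := hinj k (by omega) (l + d) (by omega) heq
        omega
      · rw [hes_hi k (by omega), hes_lo l hli] at heq
        have := hinj (k + d) (by omega) l (by omega) heq
        omega
      · rw [hes_hi k (by omega), hes_hi l (by omega)] at heq
        have := hinj (k + d) (by omega) (l + d) (by omega) heq
        omega
    · -- alternating
      intro k hk
      simp only [hlen'] at hk
      rw [par' k (by omega), par' (k+1) hk]
      omega
    · -- starts unmatched
      rw [par' 0 (by omega)]
      omega
    · -- ends unmatched
      rw [hlen', par' (n - d - 1) (by omega)]
      omega
    · rw [hvs_lo 0 (by omega)]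
      exact hdeg0
    · rw [hlen', hvs_hi (n - d) hile]
      have : n - d + d = n := by omega
      rw [this]
      exact hdegl
    · rw [hlen', hvs_lo 0 (by omega), hvs_hi (n - d) hile]
      have : n - d + d = n := by omega
      rw [this]
      exact hclosed
  have := hmin W' hW'aug
  simp only [hlen'] at this
  omega

/-- In a shortest augmenting trail every vertex occurs at most twice; hence the
length of a shortest augmenting trail is at most 2n. -/
theorem stmt_3 [Fintype V] [DecidableEq V] [DecidableEq E]
    (G : Multigraph V E) (f : V → ℕ) (M : Finset E)
    (hM : G.IsFMatching f M) (S : MWalk V E) (hS : IsSAT G f M S) :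
    (∀ v : V, ((Finset.range (S.len + 1)).filter (fun i => S.vs i = v)).card ≤ 2) ∧
    S.len ≤ 2 * Fintype.card V := by
  have key : ∀ v : V,
      ((Finset.range (S.len + 1)).filter (fun i => S.vs i = v)).card ≤ 2 := by
    intro v
    have hmaps : ∀ a ∈ (Finset.range (S.len + 1)).filter (fun i => S.vs i = v),
        a % 2 ∈ ({0, 1} : Finset ℕ) := by
      intro a _
      simp only [Finset.mem_insert, Finset.mem_singleton]
      omega
    have hinj : Set.InjOn (fun i => i % 2)
        ((Finset.range (S.len + 1)).filter (fun i => S.vs i = v)) := by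
      intro a ha b hb hab
      simp only [Finset.coe_filter, Finset.mem_range, Set.mem_setOf_eq] at ha hb
      simp only at hab
      rcases lt_trichotomy a b with h | h | h
      · have := sat_occ_parity G f M S hS h (by omega) (ha.2.trans hb.2.symm)
        omega
      · exact h
      · have := sat_occ_parity G f M S hS h (by omega) (hb.2.trans ha.2.symm)
        omega
    have := Finset.card_le_card_of_injOn (fun i => i % 2) hmaps hinj
    simpa using this
  refine ⟨key, ?_⟩
  have hsum := Finset.card_eq_sum_card_fiberwise
    (f := S.vs) (s := Finset.range (S.len + 1)) (t := Finset.univ)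
    (fun x _ => Finset.mem_univ _)
  rw [Finset.card_range] at hsum
  have hle : ∑ v : V, ((Finset.range (S.len + 1)).filter (fun i => S.vs i = v)).card
      ≤ ∑ _v : V, 2 := Finset.sum_le_sum (fun v _ => key v)
  rw [Finset.sum_const, Finset.card_univ, smul_eq_mul] at hle
  omega
end

section
/- Suppose any f-matching has at most 4(n/s)² more edges than the current matching M whenever every augmenting trail for M has length at least s. Then the blocking-set algorithm, which repeatedly augments along a maximal set of edge-disjoint shortest augmenting trails, performs at most 4n^{2/3} phases: after at most 2^{2/3}·n^{2/3} phases the shortest augmenting trail length exceeds 2^{2/3}·n^{2/3}, and at most 2^{2/3}·n^{2/3} further augmentations remain, for a total of fewer than 4n^{2/3} phases. -/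
/-- The blocking-set algorithm performs fewer than 4·n^{2/3} phases. Here
`size k` is the matching size and `sat k` the shortest augmenting trail length
at the start of phase k (sat lengths strictly increase, so `sat k ≥ k+1`);
each phase augments at least one trail (adding ≥ 2 edges); and the key
property (*) bounds any later matching: size T ≤ size k + 4(n/sat k)². -/
theorem stmt_4 (n T : ℕ) (hn : 1 ≤ n) (size sat : ℕ → ℕ)
    (hsat : ∀ k, k < T → k + 1 ≤ sat k)
    (hsize : ∀ k, k < T → size k + 2 ≤ size (k + 1))
    (hkey : ∀ k, k ≤ T → (size T : ℝ) ≤ (size k : ℝ) + 4 * ((n : ℝ) / (sat k : ℝ)) ^ 2) :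
    (T : ℝ) < 4 * (n : ℝ) ^ ((2 : ℝ) / 3) := by
  have hn' : (1:ℝ) ≤ (n:ℝ) := by exact_mod_cast hn
  have hnpos : (0:ℝ) < (n:ℝ) := by linarith
  set c : ℝ := (n:ℝ) ^ ((2:ℝ)/3) with hc
  have hc1 : (1:ℝ) ≤ c := by
    have : (1:ℝ) ^ ((2:ℝ)/3) ≤ (n:ℝ) ^ ((2:ℝ)/3) :=
      Real.rpow_le_rpow (by norm_num) hn' (by norm_num)
    simpa using this
  have hcpos : (0:ℝ) < c := by linarith
  have hc3 : c ^ 3 = (n:ℝ) ^ 2 := by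
    rw [hc, ← Real.rpow_natCast ((n:ℝ) ^ ((2:ℝ)/3)) 3, ← Real.rpow_mul hnpos.le,
      ← Real.rpow_natCast (n:ℝ) 2]
    norm_num
  set k := ⌊c⌋₊ with hk
  have hkc : (k:ℝ) ≤ c := Nat.floor_le hcpos.le
  have hck : c < (k:ℝ) + 1 := Nat.lt_floor_add_one c
  by_cases hT : T ≤ k
  · have hTc : (T:ℝ) ≤ c := le_trans (by exact_mod_cast hT) hkc
    nlinarith
  · push_neg at hT
    have hchain : ∀ j, k + j ≤ T → size k + 2 * j ≤ size (k + j) := by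
      intro j
      induction j with
      | zero => intro _; simp
      | succ j ih =>
        intro h
        have h1 := hsize (k + j) (by omega)
        have h2 := ih (by omega)
        have e : k + (j + 1) = (k + j) + 1 := by omega
        rw [e]; omega
    have hST := hchain (T - k) (by omega)
    rw [show k + (T - k) = T by omega] at hST
    have hkey' := hkey k hT.le
    have hsk := hsat k hT
    have hsk' : (k:ℝ) + 1 ≤ (sat k : ℝ) := by exact_mod_cast hsk
    have hskpos : (0:ℝ) < (sat k : ℝ) := by linarith
    have hfrac : (n:ℝ) / (sat k : ℝ) < (n:ℝ) / c := by
      calc (n:ℝ) / (sat k : ℝ) ≤ (n:ℝ) / ((k:ℝ) + 1) := by gcongr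
        _ < (n:ℝ) / c := by gcongr
    have hsq : ((n:ℝ) / (sat k : ℝ)) ^ 2 < ((n:ℝ) / c) ^ 2 := by
      apply pow_lt_pow_left₀ hfrac (by positivity) (by norm_num)
    have heq : ((n:ℝ) / c) ^ 2 = c := by
      rw [div_pow, div_eq_iff (by positivity)]
      linear_combination -hc3
    have hSTr : (size k : ℝ) + 2 * ((T:ℝ) - (k:ℝ)) ≤ (size T : ℝ) := by
      have h1 : ((size k + 2 * (T - k) : ℕ) : ℝ) ≤ ((size T : ℕ) : ℝ) := by
        exact_mod_cast hST
      push_cast [Nat.cast_sub hT.le] at h1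
      linarith
    nlinarith
end

section
/- With the notation of the petalevel advancement lemma, equality l_j(v, ι(v)) = l_{j̄}(u, ι(u)) + 1 holds if and only if the edge uv is tight (its dual constraint holds with equality) and uv alternates at every positive blossom it leaves: for every positive blossom A with u ∈ A and v ∉ A, either ι_A(u) = b or uv = η(A). -/
/-- Equality in the petalevel advancement inequality holds iff the edge uv is
tight and alternates at every positive blossom it leaves: for every positive
blossom A with u ∈ A, v ∉ A, either ι_A(u) = b or uv = η(A). Setup as in the
petalevel advancement lemma with natural petalevels. -/
theorem stmt_9 (B : Type) [DecidableEq B] (Pos : Finset B) (z : B → ℝ)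
    (hz : ∀ A ∈ Pos, 0 < z A)
    (inU inV isBase ιU ιV : B → Bool)
    (hrule : ∀ A ∈ Pos, inV A = true →
      ιV A = (if inU A = true then ιU A else isBase A))
    (hleave : ∀ A ∈ Pos, inU A = true → inV A = false → isBase A = true →
      ιU A = false)
    (hbase : ∀ A ∈ Pos, isBase A = true → inU A ≠ inV A)
    (matched : Bool) (yu yv yφ : ℝ) (zuv : ℝ)
    (hzuv : zuv = ∑ A ∈ Pos.filter (fun A =>
        (inU A = true ∧ inV A = true) ∨
        (if matched then (inU A ≠ inV A) ∧ isBase A = false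
         else isBase A = true)), z A)
    (hdual : if matched then yu + yv + zuv ≤ 2 else 0 ≤ yu + yv + zuv) :
    (if matched then
      yv - yφ + (∑ A ∈ Pos.filter (fun A => inV A = true ∧ ιV A = false), z A)
        = (1 - (yu + yφ + ∑ A ∈ Pos.filter (fun A => inU A = true ∧ ιU A = true), z A)) + 1
    else
      1 - (yv + yφ + ∑ A ∈ Pos.filter (fun A => inV A = true ∧ ιV A = true), z A)
        = (yu - yφ + ∑ A ∈ Pos.filter (fun A => inU A = true ∧ ιU A = false), z A) + 1)
    ↔
    ((yu + yv + zuv = (if matched then (2 : ℝ) else 0)) ∧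
     (∀ A ∈ Pos, inU A = true → inV A = false → (ιU A = true ∨ isBase A = true))) := by
  cases matched
  · -- unmatched case
    simp only [Bool.false_eq_true, if_false] at hzuv hdual ⊢
    rw [Finset.sum_filter] at hzuv
    rw [Finset.sum_filter (fun A => inV A = true ∧ ιV A = true),
        Finset.sum_filter (fun A => inU A = true ∧ ιU A = false)]
    set f : B → ℝ := fun A =>
      if (inU A = true ∧ inV A = true) ∨ isBase A = true then z A else 0 with hf
    set g : B → ℝ := fun A =>
      (if inV A = true ∧ ιV A = true then z A else 0) +
      (if inU A = true ∧ ιU A = false then z A else 0) with hg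
    have hle : ∀ A ∈ Pos, f A ≤ g A := by
      intro A hA
      clear hzuv hdual
      have hzA := hz A hA
      have hr := hrule A hA
      have hl := hleave A hA
      have hb := hbase A hA
      simp only [hf, hg]
      cases hU : inU A <;> cases hV : inV A <;> cases hB : isBase A <;>
        cases hι : ιU A <;> simp_all <;> linarith [hz A hA]
    have hiff : ∀ A ∈ Pos, (f A = g A ↔
        (inU A = true → inV A = false → (ιU A = true ∨ isBase A = true))) := by
      intro A hA
      clear hzuv hdual hle
      have hzA := hz A hA
      have hr := hrule A hA
      have hl := hleave A hA
      have hb := hbase A hA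
      simp only [hf, hg]
      cases hU : inU A <;> cases hV : inV A <;> cases hB : isBase A <;>
        cases hι : ιU A <;> simp_all <;> linarith [hz A hA]
    have hS : (∑ A ∈ Pos, (if inV A = true ∧ ιV A = true then z A else 0)) +
        (∑ A ∈ Pos, (if inU A = true ∧ ιU A = false then z A else 0)) =
        ∑ A ∈ Pos, g A := Finset.sum_add_distrib.symm
    have hsle : zuv ≤ ∑ A ∈ Pos, g A := by
      rw [hzuv]; exact Finset.sum_le_sum hle
    have heqiff : zuv = ∑ A ∈ Pos, g A ↔
        (∀ A ∈ Pos, inU A = true → inV A = false → (ιU A = true ∨ isBase A = true)) := by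
      rw [hzuv]
      exact (Finset.sum_eq_sum_iff_of_le hle).trans (forall₂_congr hiff)
    constructor
    · intro h
      have h0 : yu + yv + (∑ A ∈ Pos, g A) = 0 := by
        rw [← hS]; linarith
      have ht : yu + yv + zuv = 0 := by linarith
      exact ⟨ht, heqiff.mp (by linarith)⟩
    · rintro ⟨ht, hc⟩
      have := heqiff.mpr hc
      have h0 : yu + yv + (∑ A ∈ Pos, g A) = 0 := by linarith
      rw [← hS] at h0
      linarith
  · -- matched case
    simp only [if_true] at hzuv hdual ⊢
    rw [Finset.sum_filter] at hzuv
    rw [Finset.sum_filter (fun A => inV A = true ∧ ιV A = false),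
        Finset.sum_filter (fun A => inU A = true ∧ ιU A = true)]
    set f : B → ℝ := fun A =>
      if (inU A = true ∧ inV A = true) ∨ ((inU A ≠ inV A) ∧ isBase A = false)
        then z A else 0 with hf
    set g : B → ℝ := fun A =>
      (if inV A = true ∧ ιV A = false then z A else 0) +
      (if inU A = true ∧ ιU A = true then z A else 0) with hg
    have hle : ∀ A ∈ Pos, g A ≤ f A := by
      intro A hA
      clear hzuv hdual
      have hzA := hz A hA
      have hr := hrule A hA
      have hl := hleave A hA
      have hb := hbase A hA
      simp only [hf, hg]
      cases hU : inU A <;> cases hV : inV A <;> cases hB : isBase A <;>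
        cases hι : ιU A <;> simp_all <;> linarith [hz A hA]
    have hiff : ∀ A ∈ Pos, (g A = f A ↔
        (inU A = true → inV A = false → (ιU A = true ∨ isBase A = true))) := by
      intro A hA
      clear hzuv hdual hle
      have hzA := hz A hA
      have hr := hrule A hA
      have hl := hleave A hA
      have hb := hbase A hA
      simp only [hf, hg]
      cases hU : inU A <;> cases hV : inV A <;> cases hB : isBase A <;>
        cases hι : ιU A <;> simp_all <;> linarith [hz A hA]
    have hS : (∑ A ∈ Pos, (if inV A = true ∧ ιV A = false then z A else 0)) +
        (∑ A ∈ Pos, (if inU A = true ∧ ιU A = true then z A else 0)) =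
        ∑ A ∈ Pos, g A := Finset.sum_add_distrib.symm
    have hsle : (∑ A ∈ Pos, g A) ≤ zuv := by
      rw [hzuv]; exact Finset.sum_le_sum hle
    have heqiff : (∑ A ∈ Pos, g A) = zuv ↔
        (∀ A ∈ Pos, inU A = true → inV A = false → (ιU A = true ∨ isBase A = true)) := by
      rw [hzuv]
      exact (Finset.sum_eq_sum_iff_of_le hle).trans (forall₂_congr hiff)
    constructor
    · intro h
      have h0 : yu + yv + (∑ A ∈ Pos, g A) = 2 := by
        rw [← hS]; linarith
      have ht : yu + yv + zuv = 2 := by linarith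
      exact ⟨ht, heqiff.mp (by linarith)⟩
    · rintro ⟨ht, hc⟩
      have := heqiff.mpr hc
      have h0 : yu + yv + (∑ A ∈ Pos, g A) = 2 := by linarith
      rw [← hS] at h0
      linarith
end

section
/- For a matched edge uv on the tracked trail (with natural petalevels), the blossom z-contributions satisfy z(uv) ≥ z_b(u, ι(u)) + z_p(v, ι(v)), where z(uv) = Σ{z(A) : uv ∈ γ(A) ∪ I(A)}. Moreover this inequality holds blossom-by-blossom: every positive blossom A contributes at least as much to the left side as to the right side. -/
/-- For a matched edge uv on the tracked trail with natural petalevels,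
z(uv) ≥ z_b(u,ι(u)) + z_p(v,ι(v)), and the inequality holds blossom-by-blossom:
every positive blossom contributes at least as much to the left side as to
the right side. For a matched edge, uv ∈ γ(A) ∪ I(A) iff (u,v ∈ A) or
(uv ∈ δ(A) and uv ≠ η(A)). -/
theorem stmt_10 (B : Type) [DecidableEq B] (Pos : Finset B) (z : B → ℝ)
    (hz : ∀ A ∈ Pos, 0 < z A)
    (inU inV isBase ιU ιV : B → Bool)
    (hrule : ∀ A ∈ Pos, inV A = true →
      ιV A = (if inU A = true then ιU A else isBase A))
    (hleave : ∀ A ∈ Pos, inU A = true → inV A = false → isBase A = true →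
      ιU A = false)
    (hbase : ∀ A ∈ Pos, isBase A = true → inU A ≠ inV A) :
    ((∑ A ∈ Pos.filter (fun A => inU A = true ∧ ιU A = true), z A) +
     (∑ A ∈ Pos.filter (fun A => inV A = true ∧ ιV A = false), z A)
      ≤ ∑ A ∈ Pos.filter (fun A =>
          (inU A = true ∧ inV A = true) ∨
          ((inU A ≠ inV A) ∧ isBase A = false)), z A) ∧
    (∀ A ∈ Pos,
      (if inU A = true ∧ ιU A = true then z A else 0) +
      (if inV A = true ∧ ιV A = false then z A else 0)
        ≤ (if (inU A = true ∧ inV A = true) ∨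
              ((inU A ≠ inV A) ∧ isBase A = false) then z A else 0)) := by
  have key : ∀ A ∈ Pos,
      (if inU A = true ∧ ιU A = true then z A else 0) +
      (if inV A = true ∧ ιV A = false then z A else 0)
        ≤ (if (inU A = true ∧ inV A = true) ∨
              ((inU A ≠ inV A) ∧ isBase A = false) then z A else 0) := by
    intro A hA
    have hzA := (hz A hA).le
    have h1 := hrule A hA
    have h2 := hleave A hA
    have h3 := hbase A hA
    cases hU : inU A <;> cases hV : inV A <;> cases hB : isBase A <;>
      cases hiU : ιU A <;> cases hiV : ιV A <;> simp_all
  refine ⟨?_, key⟩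
  rw [Finset.sum_filter, Finset.sum_filter, Finset.sum_filter,
    ← Finset.sum_add_distrib]
  exact Finset.sum_le_sum key
end

section
/- The petalevel advancement inequality l_j(v, ι(v)) ≤ l_{j̄}(u, ι(u)) + 1 continues to hold when petalevels are defined using the shortened entrance rule, in which ι_A(v) = ι_A(u) when u ∈ A, ι_A(v) = b when u ∉ A and some trail of the collection T enters A on its base η(A), and ι_A(v) = p when u ∉ A and no T-trail enters A on η(A). -/
/-- Petalevel advancement continues to hold for shortened petalevels:
ι_A(v) = ι_A(u) if u ∈ A; otherwise ι_A(v) = b iff some trail of the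
edge-disjoint collection 𝒯 enters A on its base η(A) (recorded by
`entersBase`). Since trails are edge-disjoint, if uv leaves A on η(A) then no
𝒯-trail enters A on η(A), and if uv enters A on η(A) then some 𝒯-trail does. -/
theorem stmt_14 (B : Type) [DecidableEq B] (Pos : Finset B) (z : B → ℝ)
    (hz : ∀ A ∈ Pos, 0 < z A)
    (inU inV isBase ιU ιV entersBase : B → Bool)
    (hrule : ∀ A ∈ Pos, inV A = true →
      ιV A = (if inU A = true then ιU A else entersBase A))
    (hU : ∀ A ∈ Pos, inU A = true → ιU A = entersBase A)
    (hleave : ∀ A ∈ Pos, inU A = true → inV A = false → isBase A = true →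
      entersBase A = false)
    (henter : ∀ A ∈ Pos, inU A = false → inV A = true → isBase A = true →
      entersBase A = true)
    (hbase : ∀ A ∈ Pos, isBase A = true → inU A ≠ inV A)
    (matched : Bool) (yu yv yφ : ℝ) (zuv : ℝ)
    (hzuv : zuv = ∑ A ∈ Pos.filter (fun A =>
        (inU A = true ∧ inV A = true) ∨
        (if matched then (inU A ≠ inV A) ∧ isBase A = false
         else isBase A = true)), z A)
    (hdual : if matched then yu + yv + zuv ≤ 2 else 0 ≤ yu + yv + zuv) :
    if matched then
      yv - yφ + (∑ A ∈ Pos.filter (fun A => inV A = true ∧ ιV A = false), z A)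
        ≤ (1 - (yu + yφ + ∑ A ∈ Pos.filter (fun A => inU A = true ∧ ιU A = true), z A)) + 1
    else
      1 - (yv + yφ + ∑ A ∈ Pos.filter (fun A => inV A = true ∧ ιV A = true), z A)
        ≤ (yu - yφ + ∑ A ∈ Pos.filter (fun A => inU A = true ∧ ιU A = false), z A) + 1 := by
  rcases matched with _ | _
  · -- unmatched case
    simp only [Bool.false_eq_true, if_false] at hdual hzuv ⊢
    set s1 := Pos.filter (fun A => inV A = true ∧ ιV A = true) with hs1
    set s2 := Pos.filter (fun A => inU A = true ∧ ιU A = false) with hs2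
    have hdisj : Disjoint s1 s2 := by
      simp only [hs1, hs2, Finset.disjoint_left, Finset.mem_filter]
      rintro A ⟨hA, hv, hvι⟩ ⟨_, hu, huι⟩
      have h := hrule A hA hv
      rw [if_pos hu, huι] at h
      simp [h] at hvι
    have hsub : Pos.filter (fun A => (inU A = true ∧ inV A = true) ∨ isBase A = true)
        ⊆ s1 ∪ s2 := by
      intro A hA
      simp only [hs1, hs2, Finset.mem_union, Finset.mem_filter] at hA ⊢
      obtain ⟨hA, h⟩ := hA
      rcases h with ⟨hu, hv⟩ | hb
      · have h := hrule A hA hv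
        rw [if_pos hu] at h
        by_cases huι : ιU A = true
        · exact Or.inl ⟨hA, hv, by rw [h, huι]⟩
        · exact Or.inr ⟨hA, hu, by simpa using huι⟩
      · by_cases hv : inV A = true
        · have hu : inU A = false := by
            have := hbase A hA hb
            rcases h' : inU A
            · rfl
            · exact absurd (h'.trans hv.symm) this
          have he := henter A hA hu hv hb
          have h := hrule A hA hv
          rw [if_neg (by simp [hu]), he] at h
          exact Or.inl ⟨hA, hv, h⟩
        · have hv' : inV A = false := by simpa using hv
          have hu : inU A = true := by
            have := hbase A hA hb
            rcases h' : inU A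
            · exact absurd (h'.trans hv'.symm) this
            · rfl
          have he := hleave A hA hu hv' hb
          exact Or.inr ⟨hA, hu, by rw [hU A hA hu, he]⟩
    have key : zuv ≤ (∑ A ∈ s1, z A) + (∑ A ∈ s2, z A) := by
      rw [hzuv, ← Finset.sum_union hdisj]
      apply Finset.sum_le_sum_of_subset_of_nonneg hsub
      intro A hA _
      rcases Finset.mem_union.mp hA with h | h
      · exact (hz A (Finset.mem_filter.mp h).1).le
      · exact (hz A (Finset.mem_filter.mp h).1).le
    linarith
  · -- matched case
    simp only [if_true] at hdual hzuv ⊢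
    set s1 := Pos.filter (fun A => inV A = true ∧ ιV A = false) with hs1
    set s2 := Pos.filter (fun A => inU A = true ∧ ιU A = true) with hs2
    have hdisj : Disjoint s1 s2 := by
      simp only [hs1, hs2, Finset.disjoint_left, Finset.mem_filter]
      rintro A ⟨hA, hv, hvι⟩ ⟨_, hu, huι⟩
      have h := hrule A hA hv
      rw [if_pos hu, huι] at h
      simp [h] at hvι
    have hsub : s1 ∪ s2 ⊆
        Pos.filter (fun A => (inU A = true ∧ inV A = true) ∨
          ((inU A ≠ inV A) ∧ isBase A = false)) := by
      intro A hA
      simp only [hs1, hs2, Finset.mem_union, Finset.mem_filter] at hA ⊢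
      rcases hA with ⟨hA, hv, hvι⟩ | ⟨hA, hu, huι⟩
      · refine ⟨hA, ?_⟩
        by_cases hu : inU A = true
        · exact Or.inl ⟨hu, hv⟩
        · have hu' : inU A = false := by simpa using hu
          refine Or.inr ⟨by simp [hu', hv], ?_⟩
          by_cases hb : isBase A = true
          · have he := henter A hA hu' hv hb
            have h := hrule A hA hv
            rw [if_neg hu, he] at h
            rw [h] at hvι; exact absurd hvι (by simp)
          · simpa using hb
      · refine ⟨hA, ?_⟩
        by_cases hv : inV A = true
        · exact Or.inl ⟨hu, hv⟩
        · have hv' : inV A = false := by simpa using hv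
          refine Or.inr ⟨by simp [hu, hv'], ?_⟩
          by_cases hb : isBase A = true
          · have he := hleave A hA hu hv' hb
            rw [hU A hA hu, he] at huι
            exact absurd huι (by simp)
          · simpa using hb
    have key : (∑ A ∈ s1, z A) + (∑ A ∈ s2, z A) ≤ zuv := by
      rw [hzuv, ← Finset.sum_union hdisj]
      apply Finset.sum_le_sum_of_subset_of_nonneg hsub
      intro A hA _
      exact (hz A (Finset.mem_filter.mp hA).1).le
    linarith
end

section
/- Let the level graph LG* have 1 + 2L + 1 levels (levels 0 through 1+2L) and at most two nodes per vertex of G (one per io-type), where s = 1 + 2L is the shortest augmenting trail length. Then some layer (set of edges between two consecutive levels) of LG* contains at most 4n/s nodes on its boundary and hence at most 4(n/s)² edges in a simple graph; since every trail in a collection T of edge-disjoint augmenting trails uses an edge in every layer, |T| ≤ 4(n/s)². -/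
/-- Counting in the level graph LG*: with s = 1 + 2L levels of layers (levels
0 through 2L+1), at most 2 nodes per vertex of G (so ≤ 2n nodes total, `a ℓ`
nodes on level ℓ), at most a ℓ · a (ℓ+1) edges in layer ℓ (simple graph), and
every one of the k edge-disjoint 𝒯-trails using an edge of every layer, some
layer has at most 4n/s boundary nodes and at most 4(n/s)² edges; hence
k ≤ 4(n/s)². -/
theorem stmt_16 (n L k : ℕ) (hn : 1 ≤ n) (s : ℕ) (hs : s = 1 + 2 * L)
    (a e : ℕ → ℕ)
    (htotal : ∑ ℓ ∈ Finset.range (s + 1), a ℓ ≤ 2 * n)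
    (hsimple : ∀ ℓ < s, e ℓ ≤ a ℓ * a (ℓ + 1))
    (htrail : ∀ ℓ < s, k ≤ e ℓ) :
    (∃ ℓ < s, ((a ℓ : ℝ) + a (ℓ + 1) ≤ 4 * n / s) ∧
      (e ℓ : ℝ) ≤ 4 * ((n : ℝ) / s) ^ 2) ∧
    (k : ℝ) ≤ 4 * ((n : ℝ) / s) ^ 2 := by
  have hs1 : 1 ≤ s := by omega
  have hspos : (0 : ℝ) < s := by exact_mod_cast hs1
  -- total boundary sum over all layers
  have h1 : ∑ ℓ ∈ Finset.range s, a ℓ ≤ 2 * n :=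
    le_trans (Finset.sum_le_sum_of_subset (Finset.range_subset_range.2 (by omega))) htotal
  have h2 : ∑ ℓ ∈ Finset.range s, a (ℓ + 1) ≤ 2 * n := by
    have := Finset.sum_range_succ' a s
    omega
  have hsum : ∑ ℓ ∈ Finset.range s, ((a ℓ : ℝ) + a (ℓ + 1)) ≤ 4 * n := by
    rw [Finset.sum_add_distrib]
    have c1 : (∑ ℓ ∈ Finset.range s, (a ℓ : ℝ)) ≤ 2 * n := by exact_mod_cast h1
    have c2 : (∑ ℓ ∈ Finset.range s, (a (ℓ + 1) : ℝ)) ≤ 2 * n := by exact_mod_cast h2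
    linarith
  -- some layer has few boundary nodes
  have hex : ∃ ℓ ∈ Finset.range s, ((a ℓ : ℝ) + a (ℓ + 1)) ≤ 4 * n / s := by
    by_contra h
    push_neg at h
    have hlt : ∑ ℓ ∈ Finset.range s, (4 * (n : ℝ) / s) <
        ∑ ℓ ∈ Finset.range s, ((a ℓ : ℝ) + a (ℓ + 1)) :=
      Finset.sum_lt_sum_of_nonempty (by simp [Finset.nonempty_range_iff]; omega)
        (fun i hi => h i hi)
    rw [Finset.sum_const, Finset.card_range, nsmul_eq_mul] at hlt
    have : (s : ℝ) * (4 * n / s) = 4 * n := by field_simp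
    linarith
  obtain ⟨ℓ, hℓs, hℓ⟩ := hex
  rw [Finset.mem_range] at hℓs
  have hesmall : (e ℓ : ℝ) ≤ 4 * ((n : ℝ) / s) ^ 2 := by
    have he : (e ℓ : ℝ) ≤ (a ℓ : ℝ) * a (ℓ + 1) := by exact_mod_cast hsimple ℓ hℓs
    have hx : (0 : ℝ) ≤ a ℓ := Nat.cast_nonneg _
    have hy : (0 : ℝ) ≤ a (ℓ + 1) := Nat.cast_nonneg _
    have hc : 4 * ((n : ℝ) / s) ^ 2 = (4 * n / s) ^ 2 / 4 := by
      field_simp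
    rw [hc]
    nlinarith [sq_nonneg ((a ℓ : ℝ) - a (ℓ + 1)), sq_nonneg ((a ℓ : ℝ) + a (ℓ + 1)),
      mul_self_nonneg (4 * (n : ℝ) / s)]
  have hk : (k : ℝ) ≤ 4 * ((n : ℝ) / s) ^ 2 := by
    have := htrail ℓ hℓs
    have : (k : ℝ) ≤ e ℓ := by exact_mod_cast this
    linarith
  exact ⟨⟨ℓ, hℓs, hℓ, hesmall⟩, hk⟩
end
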